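/- arXiv:2206.05035 — 7 statements merged into one kernel-verified Lean document; each statement's English description precedes it below -/
import Mathlib

section
/- If n mod m > 0 and n' = n mod m with 0 < n' < m, then when distributing n' applications over m machines such that each machine hosts at most one instance and each application's unit load is split equally among its instances, the maximum fraction of load any single instance must carry, minimized over all such distributions, equals 1 / ⌊m / n'⌋. -/
/-- The minimum, over distributions of `n'` applications into positive numbers of
instances `k i` with at most one instance per machine overall (`∑ k i ≤ m`),
of the maximum load fraction `max_i 1 / k i`, equals `1 / ⌊m / n'⌋`. -/
theorem min_max_fraction (m n' : ℕ) (h1 : 0 < n') (h2 : n' < m) :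
    IsLeast {r : ℚ | ∃ k : Fin n' → ℕ, (∀ i, 0 < k i) ∧ (∑ i, k i) ≤ m ∧
      (∀ i, (1 : ℚ) / k i ≤ r) ∧ (∃ i, (1 : ℚ) / k i = r)}
      ((1 : ℚ) / ((m / n' : ℕ) : ℚ)) := by
  set q : ℕ := m / n' with hq
  have hqpos : 0 < q := Nat.div_pos h2.le h1
  constructor
  · refine ⟨fun _ => q, fun _ => hqpos, ?_, fun _ => le_refl _, ⟨0, h1⟩, rfl⟩
    simp only [Finset.sum_const, Finset.card_univ, Fintype.card_fin, smul_eq_mul]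
    calc n' * q = q * n' := Nat.mul_comm _ _
      _ ≤ m := Nat.div_mul_le_self m n'
  · rintro r ⟨k, hkpos, hsum, hbound, -⟩
    have hex : ∃ i, k i ≤ q := by
      by_contra h
      push_neg at h
      have : n' * (q + 1) ≤ ∑ i, k i := by
        calc n' * (q + 1) = ∑ _i : Fin n', (q + 1) := by
              simp [Finset.sum_const, Finset.card_univ, Nat.mul_comm]
          _ ≤ ∑ i, k i := Finset.sum_le_sum fun i _ => h i
      have hm : m < n' * (q + 1) := by
        have h3 : m % n' < n' := Nat.mod_lt _ h1
        have h4 : n' * q + m % n' = m := Nat.div_add_mod m n'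
        calc m = n' * q + m % n' := h4.symm
          _ < n' * q + n' := by omega
          _ = n' * (q + 1) := by ring
      omega
    obtain ⟨i, hi⟩ := hex
    calc (1 : ℚ) / q ≤ 1 / (k i) := by
          apply one_div_le_one_div_of_le
          · exact_mod_cast hkpos i
          · exact_mod_cast hi
      _ ≤ r := hbound i
end

section
/- Let n, m be positive integers with n mod m > 0, and Q = ⌈n/m⌉. Then the minimum achievable maximum machine CPU load, over all assignments of n applications (each with load p and unit memory) to m machines with at most Q instances per machine, is p·(⌊n/m⌋ + 1/⌊m/(n mod m)⌋). -/
/-!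
Upper bound: put `q = ⌊n/m⌋` whole applications on every machine and spread each of the
`r = n % m` remaining ones evenly over `k = ⌊m/r⌋` machines of its own (possible as `r k ≤ m`).

Lower bound: join an application to the machines holding a nonzero share of it. A connected
component with `c` machines has at most `(q + 1) c` edges, hence at most `q c + 1` applications,
and its total load is at least `p` times that number. If every load were below `p (q + 1/k)`, a
component with `q c + 1` applications would need `c ≥ k + 1`, so `n ≤ q m + m / (k + 1) < q m + r`.
-/

open Finset

namespace SimpleGraph

variable {V : Type*} {G : SimpleGraph V} {u v : V}

lemma Reachable.exists_adj_dist_lt (h : G.Reachable u v) (hne : u ≠ v) :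
    ∃ w, G.Adj v w ∧ G.dist u w < G.dist u v := by
  obtain ⟨p, hp⟩ := h.exists_walk_length_eq_dist
  have hnil : ¬p.reverse.Nil := fun h ↦ hne h.eq.symm
  refine ⟨p.reverse.snd, p.reverse.adj_snd hnil, ?_⟩
  calc G.dist u p.reverse.snd = G.dist p.reverse.snd u := dist_comm
    _ ≤ p.reverse.tail.length := dist_le _
    _ < G.dist u v := by
      rw [Walk.length_tail, Walk.length_reverse, hp]
      have := h.pos_dist_of_ne hne
      omega

end SimpleGraph

-- Equality in `h₁` forces `k < c` through `h₂`.
theorem Nat.succ_mul_le_of_le_mul_add_one {a c q k : ℕ} (h₁ : a ≤ q * c + 1)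
    (h₂ : k * a < (k * q + 1) * c) : (k + 1) * a ≤ ((k + 1) * q + 1) * c := by
  nlinarith

namespace LoadBalancing

variable {ι κ : Type*}

section Supports

variable (N : ι → Finset κ)

def supportedIn [Fintype ι] [DecidableEq κ] (T : Finset κ) : Finset ι := {i | N i ⊆ T}

-- A union of connected components of `supportGraph N`.
def Saturated (M : Finset κ) : Prop := ∀ i, ¬Disjoint (N i) M → N i ⊆ M

def supportGraph : SimpleGraph κ := .fromRel fun j j' ↦ ∃ i, j ∈ N i ∧ j' ∈ N i

variable {N}

lemma supportGraph_reachable {i : ι} {j j' : κ} (hj : j ∈ N i) (hj' : j' ∈ N i) :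
    (supportGraph N).Reachable j j' := by
  obtain rfl | hne := eq_or_ne j j'
  · rfl
  · exact SimpleGraph.Adj.reachable ((SimpleGraph.fromRel_adj ..).2 ⟨hne, .inl ⟨i, hj, hj'⟩⟩)

lemma exists_mem_of_supportGraph_adj {j j' : κ} (h : (supportGraph N).Adj j j') :
    ∃ i, j ∈ N i ∧ j' ∈ N i := by
  obtain ⟨-, ⟨i, hj, hj'⟩ | ⟨i, hj', hj⟩⟩ := h <;> exact ⟨i, ‹_›, ‹_›⟩

variable [DecidableEq κ]

lemma Saturated.sdiff {M C : Finset κ} (hM : Saturated N M) (hC : Saturated N C) :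
    Saturated N (M \ C) := by
  intro i hi
  have hiC : Disjoint (N i) C := by
    by_contra h
    exact hi (disjoint_of_subset_left (hC i h) disjoint_sdiff)
  exact subset_sdiff.2 ⟨hM i fun h ↦ hi (h.mono_right sdiff_subset), hiC⟩

variable [Fintype ι]

lemma card_supportedIn_le_add {C : Finset κ} (hC : Saturated N C) (M : Finset κ) :
    #(supportedIn N M) ≤ #(supportedIn N C) + #(supportedIn N (M \ C)) := by
  classical
  refine (card_le_card fun i hi ↦ ?_).trans (card_union_le _ _)
  simp only [supportedIn, mem_union, mem_filter, mem_univ, true_and] at hi ⊢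
  by_cases h : Disjoint (N i) C
  · exact .inr (subset_sdiff.2 ⟨hi, h⟩)
  · exact .inl (hC i h)

-- The bipartite graph on `C` and `supportedIn N C` is connected: vertices ≤ edges + 1.
lemma card_add_card_supportedIn_le (hne : ∀ i, (N i).Nonempty) {C : Finset κ} {j₀ : κ}
    (hj₀ : j₀ ∈ C) (hreach : ∀ j ∈ C, (supportGraph N).Reachable j₀ j) (hC : Saturated N C) :
    #C + #(supportedIn N C) ≤ 1 + ∑ i ∈ supportedIn N C, #(N i) := by
  set F := supportedIn N C
  choose d hdN hdmin using fun i ↦ (N i).exists_min_image ((supportGraph N).dist j₀) (hne i)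
  have hcover : C.erase j₀ ⊆ F.biUnion fun i ↦ (N i).erase (d i) := by
    intro j hj
    obtain ⟨hjne, hjC⟩ := mem_erase.1 hj
    obtain ⟨w, hadj, hlt⟩ := (hreach j hjC).exists_adj_dist_lt hjne.symm
    obtain ⟨i, hj, hw⟩ := exists_mem_of_supportGraph_adj hadj
    refine mem_biUnion.2 ⟨i, mem_filter.2 ⟨mem_univ _, hC i (not_disjoint_iff.2 ⟨j, hj, hjC⟩)⟩,
      mem_erase.2 ⟨?_, hj⟩⟩
    rintro rfl
    exact (hdmin i w hw).not_gt hlt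
  calc #C + #F = #(C.erase j₀) + #F + 1 := by rw [← card_erase_add_one hj₀]; ring
    _ ≤ ∑ i ∈ F, #((N i).erase (d i)) + #F + 1 := by
      gcongr; exact (card_le_card hcover).trans card_biUnion_le
    _ = 1 + ∑ i ∈ F, #(N i) := by
      rw [card_eq_sum_ones F, ← sum_add_distrib, add_comm]
      simp only [card_erase_add_one (hdN _)]

lemma exists_saturated_component (hne : ∀ i, (N i).Nonempty) {M : Finset κ}
    (hM : Saturated N M) {j₀ : κ} (hj₀ : j₀ ∈ M) :
    ∃ C ⊆ M, j₀ ∈ C ∧ Saturated N C ∧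
      #C + #(supportedIn N C) ≤ 1 + ∑ i ∈ supportedIn N C, #(N i) := by
  classical
  set C := M.filter ((supportGraph N).Reachable j₀)
  have hC : Saturated N C := by
    intro i hi
    obtain ⟨j, hj, hjC⟩ := not_disjoint_iff.1 hi
    obtain ⟨hjM, hreach⟩ := mem_filter.1 hjC
    exact fun j' hj' ↦ mem_filter.2
      ⟨hM i (not_disjoint_iff.2 ⟨j, hj, hjM⟩) hj', hreach.trans (supportGraph_reachable hj hj')⟩
  have hj₀C : j₀ ∈ C := mem_filter.2 ⟨hj₀, .rfl⟩
  exact ⟨C, filter_subset _ _, hj₀C, hC,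
    card_add_card_supportedIn_le hne hj₀C (fun j hj ↦ (mem_filter.1 hj).2) hC⟩

lemma card_supportedIn_le {q : ℕ} (hdeg : ∀ j, #{i | j ∈ N i} ≤ q + 1) {C : Finset κ}
    (hC : #C + #(supportedIn N C) ≤ 1 + ∑ i ∈ supportedIn N C, #(N i)) :
    #(supportedIn N C) ≤ q * #C + 1 := by
  set F := supportedIn N C
  have hedges : ∑ i ∈ F, #(N i) ≤ (q + 1) * #C :=
    calc ∑ i ∈ F, #(N i) = ∑ i ∈ F, #(C.bipartiteAbove (fun i j ↦ j ∈ N i) i) := by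
          refine sum_congr rfl fun i hi ↦ ?_
          rw [bipartiteAbove, filter_mem_eq_inter, inter_eq_right.2 (mem_filter.1 hi).2]
      _ = ∑ j ∈ C, #(F.bipartiteBelow (fun i j ↦ j ∈ N i) j) :=
          sum_card_bipartiteAbove_eq_sum_card_bipartiteBelow _
      _ ≤ ∑ _j ∈ C, (q + 1) :=
          sum_le_sum fun j _ ↦
            (card_le_card (filter_subset_filter _ (subset_univ F))).trans (hdeg j)
      _ = (q + 1) * #C := by rw [sum_const, smul_eq_mul, mul_comm]
  linarith [add_mul q 1 #C]

theorem card_supportedIn_le_of_sparse {q k : ℕ} (hne : ∀ i, (N i).Nonempty)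
    (hdeg : ∀ j, #{i | j ∈ N i} ≤ q + 1)
    (hsparse : ∀ T : Finset κ, T.Nonempty → k * #(supportedIn N T) < (k * q + 1) * #T)
    (M : Finset κ) (hM : Saturated N M) :
    (k + 1) * #(supportedIn N M) ≤ ((k + 1) * q + 1) * #M := by
  induction M using Finset.strongInduction with | H M ih =>
  obtain rfl | ⟨j₀, hj₀⟩ := M.eq_empty_or_nonempty
  · simp [supportedIn, subset_empty, (hne _).ne_empty]
  obtain ⟨C, hCM, hj₀C, hC, hCcard⟩ := exists_saturated_component hne hM hj₀
  have hCbound := Nat.succ_mul_le_of_le_mul_add_one (card_supportedIn_le hdeg hCcard)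
    (hsparse C ⟨j₀, hj₀C⟩)
  have hrest := ih (M \ C) (sdiff_ssubset hCM ⟨j₀, hj₀C⟩) (hM.sdiff hC)
  calc (k + 1) * #(supportedIn N M)
      ≤ (k + 1) * #(supportedIn N C) + (k + 1) * #(supportedIn N (M \ C)) := by
        rw [← mul_add]; gcongr; exact card_supportedIn_le_add hC M
    _ ≤ ((k + 1) * q + 1) * (#(M \ C) + #C) := by rw [mul_add]; omega
    _ = ((k + 1) * q + 1) * #M := by rw [card_sdiff_add_card_eq_card hCM]

theorem exists_dense_of_card_lt [Fintype κ] {q k : ℕ} (hne : ∀ i, (N i).Nonempty)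
    (hdeg : ∀ j, #{i | j ∈ N i} ≤ q + 1)
    (hcard : ((k + 1) * q + 1) * Fintype.card κ < (k + 1) * Fintype.card ι) :
    ∃ T : Finset κ, T.Nonempty ∧ (k * q + 1) * #T ≤ k * #(supportedIn N T) := by
  by_contra! hsparse
  have := card_supportedIn_le_of_sparse hne hdeg hsparse univ fun _ _ ↦ subset_univ _
  simp only [supportedIn, subset_univ, filter_true, card_univ] at this
  omega

end Supports

section Placements

variable {R : Type*} [Field R] [LinearOrder R] [Fintype ι] [Fintype κ]

structure IsPlacement (x : ι → κ → R) (p : R) (Q : ℕ) (L : R) : Prop where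
  nonneg : ∀ i j, 0 ≤ x i j
  demand_le : ∀ i, p ≤ ∑ j, x i j
  card_le : ∀ j, #{i | x i j ≠ 0} ≤ Q
  load_le : ∀ j, ∑ i, x i j ≤ L

def support (x : ι → κ → R) (i : ι) : Finset κ := {j | x i j ≠ 0}

variable {x : ι → κ → R} {p L : R} {Q : ℕ}

lemma IsPlacement.comp_equiv {ι' : Type*} [Fintype ι'] (hx : IsPlacement x p Q L) (e : ι' ≃ ι) :
    IsPlacement (fun i ↦ x (e i)) p Q L where
  nonneg i := hx.nonneg (e i)
  demand_le i := hx.demand_le (e i)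
  card_le j := by
    rw [card_filter, e.sum_comp fun i ↦ if x i j ≠ 0 then 1 else 0, ← card_filter]
    exact hx.card_le j
  load_le j := by rw [e.sum_comp fun i ↦ x i j]; exact hx.load_le j

variable [IsStrictOrderedRing R]

lemma IsPlacement.support_nonempty (hx : IsPlacement x p Q L) (hp : 0 < p) (i : ι) :
    (support x i).Nonempty := by
  by_contra h
  have : ∑ j, x i j = 0 := sum_eq_zero fun j _ ↦ by
    simpa [support, filter_nonempty_iff] using not_exists.1 h j
  linarith [hx.demand_le i]

lemma IsPlacement.mul_card_supportedIn_le [DecidableEq κ] (hx : IsPlacement x p Q L)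
    (T : Finset κ) : p * #(supportedIn (support x) T) ≤ #T * L := by
  set S := supportedIn (support x) T
  have hrow : ∀ i ∈ S, ∑ j, x i j = ∑ j ∈ T, x i j := fun i hi ↦ by
    refine (sum_subset (subset_univ T) fun j _ hjT ↦ ?_).symm
    by_contra h
    exact hjT ((mem_filter.1 hi).2 (mem_filter.2 ⟨mem_univ j, h⟩))
  calc p * #S = ∑ _i ∈ S, p := by rw [sum_const, nsmul_eq_mul, mul_comm]
    _ ≤ ∑ i ∈ S, ∑ j ∈ T, x i j := sum_le_sum fun i hi ↦ hrow i hi ▸ hx.demand_le i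
    _ = ∑ j ∈ T, ∑ i ∈ S, x i j := sum_comm
    _ ≤ ∑ j ∈ T, ∑ i, x i j :=
        sum_le_sum fun j _ ↦
          sum_le_sum_of_subset_of_nonneg (subset_univ S) fun i _ _ ↦ hx.nonneg i j
    _ ≤ ∑ _j ∈ T, L := sum_le_sum fun j _ ↦ hx.load_le j
    _ = #T * L := by rw [sum_const, nsmul_eq_mul]

theorem IsPlacement.le_load [DecidableEq κ] {q k : ℕ} (hx : IsPlacement x p (q + 1) L)
    (hp : 0 < p) (hk : 0 < k)
    (hcard : ((k + 1) * q + 1) * Fintype.card κ < (k + 1) * Fintype.card ι) :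
    p * (q + 1 / k) ≤ L := by
  have hdeg : ∀ j, #{i | j ∈ support x i} ≤ q + 1 := fun j ↦ by
    simpa [support] using hx.card_le j
  obtain ⟨T, hT, hdense⟩ := exists_dense_of_card_lt (hx.support_nonempty hp) hdeg hcard
  have hdense' : ((k * q + 1 : ℕ) : R) * #T ≤ k * #(supportedIn (support x) T) := by
    exact_mod_cast hdense
  have hT : (0 : R) < #T := by exact_mod_cast hT.card_pos
  have hk : (0 : R) < k := by exact_mod_cast hk
  have hload := hx.mul_card_supportedIn_le T
  push_cast at hdense'
  rw [show p * (q + 1 / k) = p * (k * q + 1) / k by field_simp, div_le_iff₀ hk]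
  nlinarith

end Placements

section Construction

variable {R : Type*} [Field R] {β : Type*} [DecidableEq κ] (q k : ℕ) (g : β × Fin k ↪ κ) (p : R)

def roundRobin : (Fin q × κ) ⊕ β → κ → R
  | .inl (_, j'), j => if j' = j then p else 0
  | .inr b, j => ∑ t, if g (b, t) = j then p / k else 0

variable {q k g p}

lemma sum_roundRobin_inl [Fintype κ] (j : κ) :
    ∑ a : Fin q × κ, roundRobin q k g p (.inl a) j = q * p := by
  simp [roundRobin, Fintype.sum_prod_type]

variable [LinearOrder R]

lemma card_roundRobin_inl_ne_zero_le [Fintype κ] (j : κ) :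
    #{a : Fin q × κ | roundRobin q k g p (.inl a) j ≠ 0} ≤ q :=
  calc _ ≤ #{a : Fin q × κ | a.2 = j} := by
        refine card_le_card (monotone_filter_right _ fun a _ ha ↦ ?_)
        by_contra h
        exact ha (if_neg h)
    _ = q := by rw [card_filter, Fintype.sum_prod_type]; simp

lemma card_roundRobin_inr_ne_zero_le [Fintype β] (j : κ) :
    #{b | roundRobin q k g p (.inr b) j ≠ 0} ≤ 1 := by
  refine card_le_one.2 fun b hb b' hb' ↦ ?_
  obtain ⟨t, -, ht⟩ := exists_ne_zero_of_sum_ne_zero (mem_filter.1 hb).2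
  obtain ⟨t', -, ht'⟩ := exists_ne_zero_of_sum_ne_zero (mem_filter.1 hb').2
  exact congrArg Prod.fst
    (g.injective ((ite_ne_right_iff.1 ht).1.trans (ite_ne_right_iff.1 ht').1.symm))

variable [IsStrictOrderedRing R]

lemma sum_roundRobin_inr [Fintype κ] (b : β) (hk : 0 < k) :
    ∑ j, roundRobin q k g p (.inr b) j = p := by
  simp only [roundRobin]
  rw [sum_comm]
  simp only [sum_ite_eq, mem_univ, if_true, sum_const, card_univ, Fintype.card_fin, nsmul_eq_mul]
  field_simp

lemma sum_roundRobin_inr_le [Fintype β] (hp : 0 ≤ p) (j : κ) :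
    ∑ b, roundRobin q k g p (.inr b) j ≤ p / k := by
  simp only [roundRobin]
  rw [← Fintype.sum_prod_type', sum_ite, sum_const_zero, add_zero, sum_const, nsmul_eq_mul]
  have hfibre : #{u | g u = j} ≤ 1 := card_le_one.2 fun u hu u' hu' ↦
    g.injective ((mem_filter.1 hu).2.trans (mem_filter.1 hu').2.symm)
  exact mul_le_of_le_one_left (by positivity) (by exact_mod_cast hfibre)

theorem isPlacement_roundRobin [Fintype κ] [Fintype β] (hp : 0 ≤ p) (hk : 0 < k) :
    IsPlacement (roundRobin q k g p) p (q + 1) (p * (q + 1 / k)) where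
  nonneg
    | .inl _, _ => by simp only [roundRobin]; split_ifs <;> positivity
    | .inr _, _ => sum_nonneg fun _ _ ↦ by split_ifs <;> positivity
  demand_le
    | .inl (_, j') => by simp [roundRobin]
    | .inr b => (sum_roundRobin_inr b hk).ge
  card_le j := by
    rw [card_filter, Fintype.sum_sum_type, ← card_filter, ← card_filter]
    exact add_le_add (card_roundRobin_inl_ne_zero_le j) (card_roundRobin_inr_ne_zero_le j)
  load_le j := by
    rw [Fintype.sum_sum_type, sum_roundRobin_inl j, mul_add, mul_one_div, mul_comm p]
    gcongr
    exact sum_roundRobin_inr_le hp j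

end Construction

end LoadBalancing

theorem min_max_load_tight_general (n m : ℕ) (p : ℚ) (hp : 0 < p)
    (hm : 0 < m) (hmod : n % m ≠ 0) :
    IsLeast {L : ℚ | ∃ x : Fin n → Fin m → ℚ,
      (∀ i j, 0 ≤ x i j) ∧
      (∀ i, p ≤ ∑ j, x i j) ∧
      (∀ j, (Finset.univ.filter (fun i => x i j ≠ 0)).card ≤ n / m + 1) ∧
      (∀ j, ∑ i, x i j ≤ L)}
      (p * (((n / m : ℕ) : ℚ) + 1 / ((m / (n % m) : ℕ) : ℚ))) := by
  set q := n / m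
  set r := n % m
  set k := m / r
  have hr : 0 < r := Nat.pos_of_ne_zero hmod
  have hk : 0 < k := Nat.div_pos (Nat.mod_lt n hm).le hr
  have hn : q * m + r = n := by rw [mul_comm]; exact Nat.div_add_mod n m
  refine ⟨?_, fun L ⟨x, h₁, h₂, h₃, h₄⟩ ↦
    LoadBalancing.IsPlacement.le_load ⟨h₁, h₂, h₃, h₄⟩ hp hk ?_⟩
  · obtain ⟨g⟩ : Nonempty (Fin r × Fin k ↪ Fin m) :=
      Function.Embedding.nonempty_of_card_le (by simpa using Nat.mul_div_le m r)
    let e : Fin n ≃ (Fin q × Fin m) ⊕ Fin r := Fintype.equivOfCardEq (by simp [hn])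
    obtain ⟨h₁, h₂, h₃, h₄⟩ :=
      (LoadBalancing.isPlacement_roundRobin (g := g) hp.le hk).comp_equiv e
    exact ⟨_, h₁, h₂, h₃, h₄⟩
  · have : m < (k + 1) * r := by
      rw [mul_comm]; exact Nat.lt_mul_div_succ m hr
    simp only [Fintype.card_fin, ← hn]
    nlinarith

/-- Balancing with `n` applications of common load `p` and unit memory, `m` machines
with memory capacity `Q = ⌈n/m⌉ = n/m + 1` (since `n % m > 0`): the minimum
achievable maximum machine load is `p * (⌊n/m⌋ + 1/⌊m/(n % m)⌋)`. -/
theorem min_max_load_tight (n m : ℕ) (p : ℚ) (hp : 0 < p) (hn : 0 < n)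
    (hm : 0 < m) (hmod : n % m ≠ 0) :
    IsLeast {L : ℚ | ∃ x : Fin n → Fin m → ℚ,
      (∀ i j, 0 ≤ x i j) ∧
      (∀ i, p ≤ ∑ j, x i j) ∧
      (∀ j, (Finset.univ.filter (fun i => x i j ≠ 0)).card ≤ n / m + 1) ∧
      (∀ j, ∑ i, x i j ≤ L)}
      (p * (((n / m : ℕ) : ℚ) + 1 / ((m / (n % m) : ℕ) : ℚ))) :=
  min_max_load_tight_general n m p hp hm hmod
end

section
/- Let n, m be positive integers with n mod m > 0 and suppose the memory capacity satisfies Q > ⌈n/m⌉ (unit memory per instance). Then there is an assignment of n applications, each of load p, to m machines, each machine receiving at most Q instances, achieving maximum machine load exactly p·n/m (the trivial lower bound). -/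
/-!
Lay the applications side by side on the line as the unit intervals `[i, i + 1]`, `i < n`, cut
`[0, n]` into `m` consecutive pieces `[j c, (j + 1) c]` of length `c = n / m`, and give machine `j`
the share `p · |[i, i + 1] ∩ [j c, (j + 1) c]|` of application `i`. Each application is covered
exactly once by the pieces and each piece has length `c`, so every application receives load `p`
and every machine carries load `p c = p n / m`. A piece of length `c` meets at most `⌈c⌉ + 1`
unit intervals, and `⌈n / m⌉ + 1 ≤ n / m + 2 ≤ Q`.
-/

open Finset

section Overlap

variable {α : Type*} [AddCommGroup α] [LinearOrder α]

def overlap (a b s t : α) : α := max 0 (min b t - max a s)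

lemma overlap_nonneg (a b s t : α) : 0 ≤ overlap a b s t := le_max_left _ _

lemma overlap_comm (a b s t : α) : overlap a b s t = overlap s t a b := by
  rw [overlap, overlap, min_comm b t, max_comm a s]

variable [IsOrderedAddMonoid α]

lemma lt_of_overlap_ne_zero {a b s t : α} (h : overlap a b s t ≠ 0) : s < b ∧ a < t := by
  have hpos : max a s < min b t := by
    by_contra! hle
    exact h (max_eq_left (sub_nonpos.2 hle))
  exact ⟨(le_max_right a s).trans_lt (hpos.trans_le (min_le_left b t)),
    (le_max_left a s).trans_lt (hpos.trans_le (min_le_right b t))⟩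

/-- Clamping to `[a, b]` makes sums of overlaps telescope. -/
lemma overlap_eq_sub {a b s t : α} (hst : s ≤ t) :
    overlap a b s t = max a (min b t) - max a (min b s) := by
  unfold overlap
  grind

lemma sum_range_overlap {a b : α} {f : ℕ → α} (hab : a ≤ b) (hf : Monotone f) {N : ℕ}
    (h0 : f 0 ≤ a) (hN : b ≤ f N) :
    ∑ k ∈ range N, overlap a b (f k) (f (k + 1)) = b - a := by
  rw [sum_congr rfl fun k _ => overlap_eq_sub (hf k.le_succ),
    sum_range_sub (fun k => max a (min b (f k))), min_eq_left hN, max_eq_right hab,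
    min_eq_right (h0.trans hab), max_eq_left h0]

end Overlap

section Counting

variable {α : Type*} [Ring α] [LinearOrder α] [IsStrictOrderedRing α] [FloorSemiring α]

lemma card_overlap_unit_ne_zero_le (n : ℕ) (s t : α) :
    #{i : Fin n | overlap (i : α) (i + 1) s t ≠ 0} ≤ ⌈t⌉₊ + 1 - ⌈s⌉₊ := by
  have hmaps : ∀ i ∈ ({i : Fin n | overlap (i : α) (i + 1) s t ≠ 0} : Finset (Fin n)),
      (i : ℕ) ∈ Ico (⌈s⌉₊ - 1) ⌈t⌉₊ := by
    intro i hi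
    obtain ⟨hs, ht⟩ := lt_of_overlap_ne_zero (mem_filter.1 hi).2
    have hs' : ⌈s⌉₊ ≤ (i : ℕ) + 1 := Nat.ceil_le.2 (by exact_mod_cast hs.le)
    exact mem_Ico.2 ⟨by omega, Nat.lt_ceil.2 ht⟩
  calc #{i : Fin n | overlap (i : α) (i + 1) s t ≠ 0}
      ≤ #(Ico (⌈s⌉₊ - 1) ⌈t⌉₊) := card_le_card_of_injOn _ hmaps Fin.val_injective.injOn
    _ ≤ ⌈t⌉₊ + 1 - ⌈s⌉₊ := by rw [Nat.card_Ico]; omega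

end Counting

section Slicing

variable {K : Type*} [Field K] [LinearOrder K] [IsStrictOrderedRing K]

def sliceShare (n m : ℕ) (i : Fin n) (j : Fin m) : K :=
  overlap (i : K) (i + 1) (j * ((n : K) / m)) ((j + 1) * ((n : K) / m))

lemma sum_sliceShare_machines {n m : ℕ} (hm : 0 < m) (i : Fin n) :
    ∑ j : Fin m, (sliceShare n m i j : K) = 1 := by
  have hmc : (m : K) * ((n : K) / m) = n := mul_div_cancel₀ _ (by positivity)
  have hi : (i : K) + 1 ≤ n := by exact_mod_cast i.2
  have hsum := sum_range_overlap (f := fun k : ℕ => (k : K) * ((n : K) / m)) (N := m)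
    (le_add_of_nonneg_right zero_le_one) (fun a b hab => by dsimp only; gcongr) (by simp)
    (hmc ▸ hi)
  push_cast at hsum
  unfold sliceShare
  rw [Fin.sum_univ_eq_sum_range (fun j => overlap (i : K) (i + 1) (j * ((n : K) / m))
    ((j + 1) * ((n : K) / m))) m, hsum, add_sub_cancel_left]

lemma sum_sliceShare_applications {n m : ℕ} (hm : 0 < m) (j : Fin m) :
    ∑ i : Fin n, (sliceShare n m i j : K) = (n : K) / m := by
  have hmc : (m : K) * ((n : K) / m) = n := mul_div_cancel₀ _ (by positivity)
  have hj : (j : K) + 1 ≤ m := by exact_mod_cast j.2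
  have hsum := sum_range_overlap (a := (j : K) * ((n : K) / m)) (b := (j + 1) * ((n : K) / m))
    (f := Nat.cast) (N := n) (by gcongr; linarith) Nat.mono_cast (by rw [Nat.cast_zero]; positivity)
    ((mul_le_mul_of_nonneg_right hj (by positivity)).trans hmc.le)
  push_cast at hsum
  unfold sliceShare
  rw [sum_congr rfl fun i _ => overlap_comm _ _ _ _, Fin.sum_univ_eq_sum_range
    (fun i => overlap (j * ((n : K) / m)) ((j + 1) * ((n : K) / m)) (i : K) (i + 1)) n, hsum]
  ring

variable [FloorSemiring K]

lemma card_sliceShare_ne_zero_le {n m : ℕ} (j : Fin m) :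
    #{i : Fin n | (sliceShare n m i j : K) ≠ 0} ≤ n / m + 2 := by
  have hslice :
      ⌈((j : K) + 1) * ((n : K) / m)⌉₊ ≤ ⌈(j : K) * ((n : K) / m)⌉₊ + ⌈(n : K) / m⌉₊ := by
    rw [add_one_mul]
    exact Nat.ceil_add_le _ _
  have hc : ⌈(n : K) / m⌉₊ ≤ n / m + 1 := by
    simpa [Nat.floor_div_eq_div] using Nat.ceil_le_floor_add_one ((n : K) / m)
  have hcard :=
    card_overlap_unit_ne_zero_le n ((j : K) * ((n : K) / m)) (((j : K) + 1) * ((n : K) / m))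
  unfold sliceShare
  omega

end Slicing

theorem exists_perfectly_balanced_general (n m Q : ℕ) (p : ℚ) (hp : 0 < p)
    (hm : 0 < m) (hQ : n / m + 1 < Q) :
    ∃ x : Fin n → Fin m → ℚ,
      (∀ i j, 0 ≤ x i j) ∧
      (∀ i, p ≤ ∑ j, x i j) ∧
      (∀ j, (Finset.univ.filter (fun i => x i j ≠ 0)).card ≤ Q) ∧
      (∀ j, ∑ i, x i j ≤ p * n / m) := by
  refine ⟨fun i j => p * sliceShare n m i j, fun i j => ?_, fun i => ?_, fun j => ?_, fun j => ?_⟩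
  · exact mul_nonneg hp.le (overlap_nonneg _ _ _ _)
  · rw [← mul_sum, sum_sliceShare_machines hm, mul_one]
  · calc #{i | p * sliceShare n m i j ≠ 0} = #{i | (sliceShare n m i j : ℚ) ≠ 0} := by
          simp [hp.ne']
      _ ≤ n / m + 2 := card_sliceShare_ne_zero_le j
      _ ≤ Q := hQ
  · rw [← mul_sum, sum_sliceShare_applications hm, mul_div_assoc]

/-- If `n % m > 0` and the memory capacity satisfies `Q > ⌈n/m⌉ = n/m + 1`, then
there is an assignment of the `n` applications (common load `p`, unit memory) to
the `m` machines achieving maximum machine load exactly `p * n / m`. -/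
theorem exists_perfectly_balanced (n m Q : ℕ) (p : ℚ) (hp : 0 < p) (hn : 0 < n)
    (hm : 0 < m) (hmod : n % m ≠ 0) (hQ : n / m + 1 < Q) :
    ∃ x : Fin n → Fin m → ℚ,
      (∀ i j, 0 ≤ x i j) ∧
      (∀ i, p ≤ ∑ j, x i j) ∧
      (∀ j, (Finset.univ.filter (fun i => x i j ≠ 0)).card ≤ Q) ∧
      (∀ j, ∑ i, x i j ≤ p * n / m) :=
  exists_perfectly_balanced_general n m Q p hp hm hQ
end

section
/- In the common-requirements bin-packing setting, if p divides P and q divides Q, then the minimum number of machines in the multi-instanced model equals the minimum in the single-instanced model, namely ⌈n / min(P div p, Q div q)⌉. -/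
/-- Single-instanced model: each application (load `p`, memory `q`) is placed
wholly on one machine; per-machine load and memory must fit. -/
def FeasibleSingle (n k p q P Q : ℕ) (f : Fin n → Fin k) : Prop :=
  ∀ j, (Finset.univ.filter (fun i => f i = j)).card * p ≤ P ∧
       (Finset.univ.filter (fun i => f i = j)).card * q ≤ Q

/-- Multi-instanced model with common requirements `p`, `q`. -/
def FeasibleMulti (n k p q P Q : ℕ) (x : Fin n → Fin k → ℚ) : Prop :=
  (∀ i j, 0 ≤ x i j) ∧
  (∀ i, (p : ℚ) ≤ ∑ j, x i j) ∧
  (∀ j, ∑ i, x i j ≤ (P : ℚ)) ∧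
  (∀ j, (Finset.univ.filter (fun i => x i j ≠ 0)).card * q ≤ Q)

/-- If `p ∣ P` and `q ∣ Q`, then the multi-instanced and single-instanced optimal
machine counts coincide and equal `⌈n / min(P/p, Q/q)⌉`. -/
theorem common_requirements_dvd (n p q P Q : ℕ) (hp : 0 < p) (hq : 0 < q)
    (hpP : p ∣ P) (hqQ : q ∣ Q) (hp' : p ≤ P) (hq' : q ≤ Q) :
    IsLeast {k : ℕ | ∃ f : Fin n → Fin k, FeasibleSingle n k p q P Q f}
      ((n + min (P / p) (Q / q) - 1) / min (P / p) (Q / q)) ∧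
    IsLeast {k : ℕ | ∃ x : Fin n → Fin k → ℚ, FeasibleMulti n k p q P Q x}
      ((n + min (P / p) (Q / q) - 1) / min (P / p) (Q / q)) := by
  set m := min (P / p) (Q / q) with hmdef
  have hm1 : 0 < m := lt_min (Nat.div_pos hp' hp) (Nat.div_pos hq' hq)
  set k₀ := (n + m - 1) / m with hk0
  -- construct the single-instanced assignment
  have hfin : ∀ i : Fin n, (i : ℕ) / m < k₀ := by
    intro i
    have hn : 0 < n := i.pos
    have h1 : (i : ℕ) / m ≤ (n - 1) / m := Nat.div_le_div_right (by omega)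
    have h2 : (n + m - 1) / m = (n - 1) / m + 1 := by
      have h3 : n + m - 1 = (n - 1) + m := by omega
      rw [h3, Nat.add_div_right _ hm1]
    omega
  set f : Fin n → Fin k₀ := fun i => ⟨(i : ℕ) / m, hfin i⟩ with hf
  have hcardf : ∀ j : Fin k₀, (Finset.univ.filter (fun i => f i = j)).card ≤ m := by
    intro j
    have : (Finset.univ.filter (fun i : Fin n => f i = j)).card ≤ (Finset.range m).card := by
      refine Finset.card_le_card_of_injOn (fun i => (i : ℕ) % m)
        (fun i _ => Finset.mem_range.mpr (Nat.mod_lt _ hm1)) ?_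
      intro i hi i' hi' hmod
      have hmod' : (i : ℕ) % m = (i' : ℕ) % m := hmod
      simp only [Finset.mem_coe, Finset.mem_filter, hf] at hi hi'
      have e1 : (i : ℕ) / m = j := congrArg Fin.val hi.2
      have e2 : (i' : ℕ) / m = j := congrArg Fin.val hi'.2
      have : (i : ℕ) = (i' : ℕ) := by
        conv_lhs => rw [← Nat.div_add_mod (i : ℕ) m]
        conv_rhs => rw [← Nat.div_add_mod (i' : ℕ) m]
        rw [e1, e2, hmod']
      exact Fin.ext this
    simpa using this
  have hsingle : FeasibleSingle n k₀ p q P Q f := by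
    intro j
    constructor
    · calc (Finset.univ.filter (fun i => f i = j)).card * p ≤ m * p :=
            Nat.mul_le_mul_right _ (hcardf j)
        _ ≤ (P / p) * p := Nat.mul_le_mul_right _ (min_le_left _ _)
        _ = P := Nat.div_mul_cancel hpP
    · calc (Finset.univ.filter (fun i => f i = j)).card * q ≤ m * q :=
            Nat.mul_le_mul_right _ (hcardf j)
        _ ≤ (Q / q) * q := Nat.mul_le_mul_right _ (min_le_right _ _)
        _ = Q := Nat.div_mul_cancel hqQ
  -- single feasibility embeds into multi feasibility
  have embed : ∀ k (g : Fin n → Fin k), FeasibleSingle n k p q P Q g →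
      FeasibleMulti n k p q P Q (fun i j => if g i = j then (p : ℚ) else 0) := by
    intro k g hg
    refine ⟨fun i j => by positivity, fun i => ?_, fun j => ?_, fun j => ?_⟩
    · simp [Finset.sum_ite_eq]
    · have hsum : (∑ i, if g i = j then (p : ℚ) else 0)
          = (Finset.univ.filter (fun i => g i = j)).card * p := by
        rw [← Finset.sum_filter]
        simp [mul_comm]
      rw [hsum]
      have := (hg j).1
      exact_mod_cast this
    · have : (Finset.univ.filter (fun i => (if g i = j then (p : ℚ) else 0) ≠ 0))
          = Finset.univ.filter (fun i => g i = j) := by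
        apply Finset.filter_congr
        intro i _
        have hpne : (p : ℚ) ≠ 0 := by positivity
        by_cases h : g i = j <;> simp [h, hpne]
      rw [this]
      exact (hg j).2
  -- multi lower bound
  have multi_lb : ∀ k (x : Fin n → Fin k → ℚ), FeasibleMulti n k p q P Q x →
      k₀ ≤ k := by
    intro k x hx
    obtain ⟨hpos, hrow, hcol, hmem⟩ := hx
    have h1 : ((n * p : ℕ) : ℚ) ≤ ((k * P : ℕ) : ℚ) := by
      push_cast
      calc (n : ℚ) * p = ∑ _i : Fin n, (p : ℚ) := by simp [mul_comm]
        _ ≤ ∑ i, ∑ j, x i j := Finset.sum_le_sum (fun i _ => hrow i)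
        _ = ∑ j, ∑ i, x i j := Finset.sum_comm
        _ ≤ ∑ _j : Fin k, (P : ℚ) := Finset.sum_le_sum (fun j _ => hcol j)
        _ = (k : ℚ) * P := by simp [mul_comm]
    have h1' : n * p ≤ k * P := by exact_mod_cast h1
    have hP : k * P = k * (P / p) * p := by rw [mul_assoc, Nat.div_mul_cancel hpP]
    rw [hP] at h1'
    have h2 : n ≤ k * (P / p) := Nat.le_of_mul_le_mul_right h1' hp
    -- memory bound
    have hg : ∀ i : Fin n, ∃ j, x i j ≠ 0 := by
      intro i
      by_contra h
      push_neg at h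
      have hz : ∑ j, x i j = 0 := Finset.sum_eq_zero (fun j _ => h j)
      have := hrow i
      rw [hz] at this
      have : (0 : ℚ) < p := by exact_mod_cast hp
      linarith [hrow i, hz ▸ hrow i]
    choose g hgne using hg
    have hcard : ∀ j, (Finset.univ.filter (fun i => g i = j)).card ≤ Q / q := by
      intro j
      have sub : Finset.univ.filter (fun i => g i = j) ⊆
          Finset.univ.filter (fun i => x i j ≠ 0) := by
        intro i hi
        simp only [Finset.mem_filter] at hi ⊢
        exact ⟨hi.1, hi.2 ▸ hgne i⟩
      have hle := Finset.card_le_card sub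
      have hdiv : (Finset.univ.filter (fun i => x i j ≠ 0)).card ≤ Q / q :=
        (Nat.le_div_iff_mul_le hq).mpr (hmem j)
      omega
    have h3 : n ≤ k * (Q / q) := by
      have hfib := Finset.card_eq_sum_card_fiberwise
        (f := g) (s := Finset.univ) (t := Finset.univ) (fun i _ => Finset.mem_univ _)
      calc n = (Finset.univ : Finset (Fin n)).card := by simp
        _ = ∑ j : Fin k, (Finset.univ.filter (fun i => g i = j)).card := hfib
        _ ≤ ∑ _j : Fin k, (Q / q) := Finset.sum_le_sum (fun j _ => hcard j)
        _ = k * (Q / q) := by simp [mul_comm]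
    have hnm : n ≤ k * m := by
      rcases min_cases (P / p) (Q / q) with ⟨he, _⟩ | ⟨he, _⟩ <;> rw [hmdef, he]
      · exact h2
      · exact h3
    rw [hk0]
    refine (Nat.div_le_iff_le_mul_add_pred hm1).mpr ?_
    rw [Nat.mul_comm]
    omega
  constructor
  · refine ⟨⟨f, hsingle⟩, ?_⟩
    rintro k ⟨g, hgk⟩
    exact multi_lb k _ (embed k g hgk)
  · refine ⟨⟨fun i j => if f i = j then (p : ℚ) else 0, embed k₀ f hsingle⟩, ?_⟩
    rintro k ⟨x, hxk⟩
    exact multi_lb k x hxk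
end

section
/- Deciding whether n applications with unit CPU loads and arbitrary integer memory requirements can be assigned to m machines of memory capacity Q = (Σ q_i)/m so that the maximum machine CPU load is at most 3 is NP-hard, via reduction from 3-Partition. -/
/-- Reduction correctness underlying NP-hardness of balancing with unit CPU loads
and arbitrary memory requirements: a 3-Partition instance `a` (sum `m * B`) is a
yes-instance iff the `3m` applications with `p_i = 1`, `q_i = a_i` can be assigned
to `m` machines of memory capacity `B = (∑ a_i)/m` with maximum CPU load `≤ 3`. -/
theorem three_partition_iff_balancing (m B : ℕ) (hm : 0 < m)
    (a : Fin (3 * m) → ℕ) (ha : ∀ i, 0 < a i) (hsum : ∑ i, a i = m * B) :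
    (∃ f : Fin (3 * m) → Fin m,
      (∀ j, (Finset.univ.filter (fun i => f i = j)).card = 3) ∧
      (∀ j, ∑ i ∈ Finset.univ.filter (fun i => f i = j), a i = B)) ↔
    (∃ x : Fin (3 * m) → Fin m → ℚ,
      (∀ i j, 0 ≤ x i j) ∧
      (∀ i, 1 ≤ ∑ j, x i j) ∧
      (∀ j, ∑ i ∈ Finset.univ.filter (fun i => x i j ≠ 0), a i ≤ B) ∧
      (∀ j, ∑ i, x i j ≤ 3)) := by
  constructor
  · rintro ⟨f, hcard, hsumB⟩
    refine ⟨fun i j => if f i = j then 1 else 0, ?_, ?_, ?_, ?_⟩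
    · intro i j; dsimp only; split <;> norm_num
    · intro i
      simp [Finset.sum_ite_eq]
    · intro j
      have h : (Finset.univ.filter (fun i => (if f i = j then (1:ℚ) else 0) ≠ 0)) =
          Finset.univ.filter (fun i => f i = j) := by
        apply Finset.filter_congr; intro i _; split <;> simp_all
      rw [h, hsumB]
    · intro j
      have h : ∑ i, (if f i = j then (1:ℚ) else 0) =
          ((Finset.univ.filter (fun i => f i = j)).card : ℚ) := by
        rw [Finset.sum_boole]
      rw [h, hcard]; norm_num
  · rintro ⟨x, hx0, hx1, hmem, hcpu⟩
    set T : Fin (3*m) → Finset (Fin m) := fun i => Finset.univ.filter (fun j => x i j ≠ 0)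
      with hTdef
    have hTne : ∀ i, 1 ≤ (T i).card := by
      intro i
      rw [Nat.one_le_iff_ne_zero, Ne, Finset.card_eq_zero]
      intro h
      have h0 : ∑ j, x i j = 0 := by
        apply Finset.sum_eq_zero
        intro j _
        by_contra hj
        have hmem' : j ∈ T i := by simp [hTdef, hj]
        simp [h] at hmem'
      linarith [hx1 i]
    have hswap : ∑ j, ∑ i ∈ Finset.univ.filter (fun i => x i j ≠ 0), a i
        = ∑ i, (T i).card * a i := by
      simp_rw [Finset.sum_filter]
      rw [Finset.sum_comm]
      apply Finset.sum_congr rfl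
      intro i _
      rw [← Finset.sum_filter, Finset.sum_const, smul_eq_mul]
    have hle1 : ∑ i, (T i).card * a i ≤ m * B := by
      rw [← hswap]
      calc ∑ j, ∑ i ∈ Finset.univ.filter (fun i => x i j ≠ 0), a i
          ≤ ∑ _j : Fin m, B := Finset.sum_le_sum (fun j _ => hmem j)
        _ = m * B := by simp [mul_comm]
    have hge1 : ∑ i, a i ≤ ∑ i, (T i).card * a i :=
      Finset.sum_le_sum (fun i _ => Nat.le_mul_of_pos_left _ (hTne i))
    have heq : ∑ i, (T i).card * a i = ∑ i, a i := le_antisymm (by omega) hge1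
    have hcard1 : ∀ i, (T i).card = 1 := by
      intro i
      have h := (Finset.sum_eq_sum_iff_of_le
        (fun i _ => Nat.le_mul_of_pos_left _ (hTne i))).mp heq.symm i (Finset.mem_univ i)
      have := ha i
      nlinarith [hTne i]
    have hsingle : ∀ i, ∃ j, T i = {j} := fun i => Finset.card_eq_one.mp (hcard1 i)
    choose f hf using hsingle
    have hfx : ∀ i j, x i j ≠ 0 ↔ f i = j := by
      intro i j
      have : j ∈ T i ↔ j ∈ ({f i} : Finset (Fin m)) := by rw [hf i]
      simpa [hTdef, eq_comm] using this
    have hfilter : ∀ j, Finset.univ.filter (fun i => f i = j)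
        = Finset.univ.filter (fun i => x i j ≠ 0) := by
      intro j
      apply Finset.filter_congr
      intro i _
      simp [hfx i j]
    refine ⟨f, ?_, ?_⟩
    · -- cardinality 3
      have hxf1 : ∀ i, 1 ≤ x i (f i) := by
        intro i
        have hz : ∀ j, j ≠ f i → x i j = 0 := by
          intro j hj
          by_contra h
          exact hj ((hfx i j).mp h).symm
        have : ∑ j, x i j = x i (f i) :=
          Finset.sum_eq_single_of_mem (f i) (Finset.mem_univ _)
            (fun j _ hj => hz j hj)
        linarith [hx1 i]
      have hle3 : ∀ j, (Finset.univ.filter (fun i => f i = j)).card ≤ 3 := by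
        intro j
        have h1 : ((Finset.univ.filter (fun i => f i = j)).card : ℚ)
            ≤ ∑ i ∈ Finset.univ.filter (fun i => f i = j), x i j := by
          have := Finset.card_nsmul_le_sum (Finset.univ.filter (fun i => f i = j))
            (fun i => x i j) 1 (fun i hi => by
              have hfi : f i = j := (Finset.mem_filter.mp hi).2
              simpa [hfi] using hxf1 i)
          simpa using this
        have h2 : ∑ i ∈ Finset.univ.filter (fun i => f i = j), x i j ≤ ∑ i, x i j :=
          Finset.sum_le_sum_of_subset_of_nonneg (Finset.filter_subset _ _)
            (fun i _ _ => hx0 i j)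
        have h3 := hcpu j
        have : ((Finset.univ.filter (fun i => f i = j)).card : ℚ) ≤ 3 := by linarith
        exact_mod_cast this
      have htot : ∑ j, (Finset.univ.filter (fun i => f i = j)).card = 3 * m := by
        rw [← Finset.card_eq_sum_card_fiberwise (fun i _ => Finset.mem_univ (f i))]
        simp
      have heq3 : ∑ j, (Finset.univ.filter (fun i => f i = j)).card
          = ∑ _j : Fin m, 3 := by
        rw [htot]; simp [mul_comm]
      intro j
      exact (Finset.sum_eq_sum_iff_of_le (fun j _ => hle3 j)).mp heq3 j (Finset.mem_univ j)
    · -- sums equal B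
      have htot : ∑ j, ∑ i ∈ Finset.univ.filter (fun i => f i = j), a i = m * B := by
        simp_rw [hfilter]
        rw [hswap, heq, hsum]
      have heqB : ∑ j, ∑ i ∈ Finset.univ.filter (fun i => f i = j), a i
          = ∑ _j : Fin m, B := by
        rw [htot]; simp [mul_comm]
      intro j
      have hleB : ∀ j, ∑ i ∈ Finset.univ.filter (fun i => f i = j), a i ≤ B := by
        intro j; rw [hfilter]; exact hmem j
      exact (Finset.sum_eq_sum_iff_of_le (fun j _ => hleB j)).mp heqB j (Finset.mem_univ j)
end

section
/- A 3-Partition instance a_1, ..., a_{3m} with sum m·B is a yes-instance if and only if the corresponding multi-instanced scheduling instance with 3m applications (q_i = 1, p_i = a_i), m machines with memory capacity Q = 3 and CPU capacity P = B, admits an assignment using at most m machines satisfying all memory and load constraints. -/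
/-!
Every application has positive load, so it occupies at least one of the `3m` instance slots
offered by `m` machines with three slots each. There are `3m` applications, hence no application
is split and every machine hosts exactly three of them; the loads on a machine are then whole
numbers `a i`, each machine carries at most `B`, and the total `m * B` forces equality.
-/

open Finset

section Counting

variable {ι κ : Type*}

theorem Finset.eq_of_le_of_sum_le [Fintype ι] {M : Type*} [AddCommMonoid M] [PartialOrder M]
    [IsOrderedCancelAddMonoid M] {f g : ι → M} (hle : ∀ i, f i ≤ g i)
    (hsum : ∑ i, g i ≤ ∑ i, f i) (i : ι) : f i = g i :=
  (sum_eq_sum_iff_of_le fun i _ => hle i).1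
    (le_antisymm (sum_le_sum fun i _ => hle i) hsum) i (mem_univ i)

variable (r : ι → κ → Prop) [∀ i j, Decidable (r i j)]

theorem exists_forall_iff_of_card_filter_eq_one [Fintype κ] (h : ∀ i, #{j | r i j} = 1) :
    ∃ f : ι → κ, ∀ i j, r i j ↔ f i = j := by
  choose f hf using fun i => card_eq_one.1 (h i)
  refine ⟨f, fun i j => ?_⟩
  simpa [eq_comm] using congrArg (j ∈ ·) (hf i)

theorem card_filter_eq_of_forall_exists_of_card_le [Fintype ι] [Fintype κ] {k : ℕ}
    (hrow : ∀ i, ∃ j, r i j)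
    (hcol : ∀ j, #{i | r i j} ≤ k) (hcard : k * Fintype.card κ ≤ Fintype.card ι) :
    (∀ i, #{j | r i j} = 1) ∧ ∀ j, #{i | r i j} = k := by
  have hdouble : ∑ i, #{j | r i j} = ∑ j, #{i | r i j} :=
    sum_card_bipartiteAbove_eq_sum_card_bipartiteBelow r
  have hrow_pos : ∀ i, 1 ≤ #{j | r i j} := fun i =>
    card_pos.2 <| (hrow i).imp fun j hj => mem_filter.2 ⟨mem_univ j, hj⟩
  have hchain : ∑ _j : κ, k ≤ ∑ _i : ι, 1 := by simpa [mul_comm] using hcard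
  constructor
  · refine fun i => (Finset.eq_of_le_of_sum_le hrow_pos ?_ i).symm
    calc ∑ i, #{j | r i j} = ∑ j, #{i | r i j} := hdouble
      _ ≤ ∑ _j : κ, k := sum_le_sum fun j _ => hcol j
      _ ≤ ∑ _i : ι, 1 := hchain
  · refine Finset.eq_of_le_of_sum_le hcol ?_
    calc ∑ _j : κ, k ≤ ∑ _i : ι, 1 := hchain
      _ ≤ ∑ i, #{j | r i j} := sum_le_sum fun i _ => hrow_pos i
      _ = ∑ j, #{i | r i j} := hdouble

end Counting

section Packing

variable {ι κ K : Type*} [Fintype ι] [Fintype κ] [DecidableEq κ]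
  [Semiring K] [PartialOrder K] [DecidableEq K] {k B : ℕ}

theorem exists_fractional_packing_of_partition [IsOrderedRing K] (a : ι → ℕ) (f : ι → κ)
    (hcard : ∀ j, #{i | f i = j} ≤ k) (hload : ∀ j, ∑ i with f i = j, a i ≤ B) :
    ∃ x : ι → κ → K, (∀ i j, 0 ≤ x i j) ∧ (∀ i, (a i : K) ≤ ∑ j, x i j) ∧
      (∀ j, #{i | x i j ≠ 0} ≤ k) ∧ ∀ j, ∑ i, x i j ≤ B := by
  refine ⟨fun i j => if f i = j then (a i : K) else 0, fun i j => ?_, fun i => ?_,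
    fun j => ?_, fun j => ?_⟩
  · dsimp only
    split_ifs <;> positivity
  · simp
  · refine (card_le_card fun i => ?_).trans (hcard j)
    simp only [mem_filter, mem_univ, true_and]
    exact not_imp_comm.1 fun h => if_neg h
  · rw [← sum_filter]
    exact_mod_cast Nat.mono_cast (α := K) (hload j)

theorem exists_partition_of_fractional_packing [IsStrictOrderedRing K] (a : ι → ℕ)
    (ha : ∀ i, 0 < a i) (hsum : ∑ i, a i = Fintype.card κ * B)
    (hcard : k * Fintype.card κ ≤ Fintype.card ι) (x : ι → κ → K)
    (hxa : ∀ i, (a i : K) ≤ ∑ j, x i j) (hcol : ∀ j, #{i | x i j ≠ 0} ≤ k)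
    (hxB : ∀ j, ∑ i, x i j ≤ B) :
    ∃ f : ι → κ, (∀ j, #{i | f i = j} = k) ∧ ∀ j, ∑ i with f i = j, a i = B := by
  have hrow : ∀ i, ∃ j, x i j ≠ 0 := fun i => by
    by_contra! h
    have : (a i : K) ≤ 0 := by simpa [h] using hxa i
    exact (Nat.cast_pos.2 (ha i)).not_ge this
  obtain ⟨hrow_one, hcol_eq⟩ :=
    card_filter_eq_of_forall_exists_of_card_le (fun i j => x i j ≠ 0) hrow hcol hcard
  obtain ⟨f, hf⟩ := exists_forall_iff_of_card_filter_eq_one _ hrow_one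
  have hfiber : ∀ j, #{i | f i = j} = #{i | x i j ≠ 0} := fun j =>
    congrArg card <| filter_congr fun i _ => (hf i j).symm
  have hxf : ∀ i, (a i : K) ≤ x i (f i) := fun i =>
    (hxa i).trans_eq <| sum_eq_single (f i)
      (fun j _ hj => not_not.1 fun h => hj ((hf i j).1 h).symm) (by simp)
  have hload_le : ∀ j, ∑ i with f i = j, a i ≤ B := fun j => by
    have : ((∑ i with f i = j, a i : ℕ) : K) ≤ B := calc
      _ = ∑ i with f i = j, (a i : K) := by push_cast; rfl
      _ ≤ ∑ i with f i = j, x i j :=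
        sum_le_sum fun i hi => (mem_filter.1 hi).2 ▸ hxf i
      _ = ∑ i, x i j := sum_filter_of_ne fun i _ h => (hf i j).1 h
      _ ≤ B := hxB j
    exact_mod_cast this
  refine ⟨f, fun j => (hfiber j).trans (hcol_eq j), Finset.eq_of_le_of_sum_le hload_le ?_⟩
  simp [sum_fiberwise, hsum, mul_comm]

end Packing

theorem three_partition_iff_packing_general (m B : ℕ)
    (a : Fin (3 * m) → ℕ) (ha : ∀ i, 0 < a i)
    (hsum : ∑ i, a i = m * B) :
    (∃ f : Fin (3 * m) → Fin m,
      (∀ j, (Finset.univ.filter (fun i => f i = j)).card = 3) ∧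
      (∀ j, ∑ i ∈ Finset.univ.filter (fun i => f i = j), a i = B)) ↔
    (∃ x : Fin (3 * m) → Fin m → ℚ,
      (∀ i j, 0 ≤ x i j) ∧
      (∀ i, (a i : ℚ) ≤ ∑ j, x i j) ∧
      (∀ j, (Finset.univ.filter (fun i => x i j ≠ 0)).card ≤ 3) ∧
      (∀ j, ∑ i, x i j ≤ (B : ℚ))) := by
  constructor
  · rintro ⟨f, hcard, hload⟩
    exact exists_fractional_packing_of_partition a f (fun j => (hcard j).le)
      fun j => (hload j).le
  · rintro ⟨x, -, hxa, hcol, hxB⟩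
    exact exists_partition_of_fractional_packing a ha (by simpa using hsum) (by simp) x hxa
      hcol hxB

/-- Reduction correctness underlying NP-hardness of machine minimization with unit
memory and arbitrary CPU loads: a 3-Partition instance `a` (sum `m * B`, with
`B/4 < a_i < B/2`) is a yes-instance iff the `3m` applications with `q_i = 1`,
`p_i = a_i` admit a feasible assignment on `m` machines with memory capacity
`Q = 3` and CPU capacity `P = B`. -/
theorem three_partition_iff_packing (m B : ℕ) (hm : 0 < m)
    (a : Fin (3 * m) → ℕ) (ha : ∀ i, 0 < a i)
    (hbound : ∀ i, B < 4 * a i ∧ 2 * a i < B)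
    (hsum : ∑ i, a i = m * B) :
    (∃ f : Fin (3 * m) → Fin m,
      (∀ j, (Finset.univ.filter (fun i => f i = j)).card = 3) ∧
      (∀ j, ∑ i ∈ Finset.univ.filter (fun i => f i = j), a i = B)) ↔
    (∃ x : Fin (3 * m) → Fin m → ℚ,
      (∀ i j, 0 ≤ x i j) ∧
      (∀ i, (a i : ℚ) ≤ ∑ j, x i j) ∧
      (∀ j, (Finset.univ.filter (fun i => x i j ≠ 0)).card ≤ 3) ∧
      (∀ j, ∑ i, x i j ≤ (B : ℚ))) :=
  three_partition_iff_packing_general m B a ha hsum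
end

section
/- If n applications with common load p and common memory q must be scheduled on machines with capacities P ≥ p and Q ≥ q, and n mod m = 0 or Q div q > ⌈n/m⌉, then m machines suffice with maximum load p·n/m iff p·n/m ≤ P; otherwise (Q div q = ⌈n/m⌉ and n mod m > 0) m machines suffice iff p·(⌊n/m⌋ + 1/⌊m/(n mod m)⌋) ≤ P. Consequently, the minimal feasible m is monotone-decreasing-checkable and binary search over m finds the optimum. -/
/-- Ceiling of `n / m` for naturals. -/
def ceilDiv' (n m : ℕ) : ℕ := n / m + (if n % m = 0 then 0 else 1)

/-- Optimal maximum machine load `P'(m)` for `n` applications of common load `p`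
and common memory `q` on `m` machines of memory capacity `Q` (so at most `Q / q`
instances per machine), as derived in the balancing analysis. -/
noncomputable def optLoad (n : ℕ) (p : ℚ) (q Q : ℕ) (m : ℕ) : ℚ :=
  if n % m = 0 ∨ ceilDiv' n m < Q / q then p * n / m
  else p * (((n / m : ℕ) : ℚ) + 1 / ((m / (n % m) : ℕ) : ℚ))

/-- Feasible assignment of the `n` common-requirement applications on `m`
machines, with every machine load at most `P`. -/
def FeasCommon (n m : ℕ) (p : ℚ) (q Q : ℕ) (P : ℚ) (x : Fin n → Fin m → ℚ) : Prop :=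
  (∀ i j, 0 ≤ x i j) ∧
  (∀ i, p ≤ ∑ j, x i j) ∧
  (∀ j, (Finset.univ.filter (fun i => x i j ≠ 0)).card ≤ Q / q) ∧
  (∀ j, ∑ i, x i j ≤ P)

/-!
Application `i` is the unit interval `[i, i + 1]` of `[0, n]`, scaled by `p`.

Upper bounds (McNaughton's wrap-around rule): cut `[0, n]` at breakpoints
`0 = c 0 ≤ c 1 ≤ ⋯ ≤ c m = n` and give machine `j` the part of each application lying in
`[c j, c (j + 1)]`. Machine `j` then carries load `p (c (j + 1) - c j)` and hosts at most
`⌈c (j + 1)⌉ - ⌊c j⌋` applications. Equal pieces of length `n / m` give `p n / m`. In the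
tight case `r = n mod m > 0`, `r` groups of `g = ⌊m / r⌋` pieces of length `⌊n / m⌋ + 1 / g`
followed by pieces of length `⌊n / m⌋` give `p (⌊n / m⌋ + 1 / g)` with at most `⌊n / m⌋ + 1`
applications per machine.

Lower bounds: summing all loads gives `p n ≤ m P`. In the tight case join every application to
the machines it runs on. A component with `b` machines is connected and has at most
`(⌊n / m⌋ + 1) b` edges, so it contains at most `⌊n / m⌋ b + 1` applications. Since there are
`⌊n / m⌋ m + r` applications, at least `r` components are saturated, and one of them has
`b ≤ g` machines that together carry `p (⌊n / m⌋ b + 1)`.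

Monotonicity: a schedule on `m₁` machines becomes one on `m₂ ≥ m₁` machines by leaving the
extra machines idle.
-/

open Finset

theorem ceilDiv'_le_iff {n m k : ℕ} (hm : 0 < m) : ceilDiv' n m ≤ k ↔ n ≤ m * k := by
  rw [ceilDiv']
  split_ifs with h
  · rw [add_zero, ← Nat.mul_le_mul_left_iff hm, Nat.mul_div_cancel' (Nat.dvd_of_mod_eq_zero h)]
  · rw [Nat.add_one_le_iff, Nat.div_lt_iff_lt_mul hm, mul_comm k]
    refine ⟨le_of_lt, fun hle => lt_of_le_of_ne hle ?_⟩
    rintro rfl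
    simp at h

theorem le_mul_ceilDiv' {n m : ℕ} (hm : 0 < m) : n ≤ m * ceilDiv' n m :=
  (ceilDiv'_le_iff hm).1 le_rfl

theorem ceilDiv'_le_ceilDiv' {n m₁ m₂ : ℕ} (hm₁ : 0 < m₁) (h : m₁ ≤ m₂) :
    ceilDiv' n m₂ ≤ ceilDiv' n m₁ :=
  (ceilDiv'_le_iff (hm₁.trans_le h)).2 <|
    (le_mul_ceilDiv' hm₁).trans (Nat.mul_le_mul_right _ h)

section IntervalOverlap

variable {K : Type*} [Field K] [LinearOrder K] {a b c d : K}

def intervalOverlap (a b c d : K) : K := max 0 (min b d - max a c)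

theorem intervalOverlap_nonneg : 0 ≤ intervalOverlap a b c d := le_max_left _ _

theorem intervalOverlap_comm (a b c d : K) : intervalOverlap a b c d = intervalOverlap c d a b := by
  rw [intervalOverlap, intervalOverlap, min_comm b, max_comm a]

variable [IsStrictOrderedRing K]

theorem intervalOverlap_eq_sub (hab : a ≤ b) (hcd : c ≤ d) :
    intervalOverlap a b c d = max a (min b d) - max a (min b c) := by
  simp only [intervalOverlap, max_def, min_def]
  split_ifs <;> linarith

theorem lt_and_lt_of_intervalOverlap_ne_zero (h : intervalOverlap a b c d ≠ 0) :
    c < b ∧ a < d := by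
  by_contra hlt
  apply h
  rw [not_and_or, not_lt, not_lt] at hlt
  simp only [intervalOverlap, max_def, min_def]
  rcases hlt with hlt | hlt <;> split_ifs <;> linarith

theorem sum_range_intervalOverlap {f : ℕ → K} (hf : Monotone f) {k : ℕ} (hab : a ≤ b)
    (ha : f 0 ≤ a) (hb : b ≤ f k) :
    ∑ j ∈ range k, intervalOverlap a b (f j) (f (j + 1)) = b - a := by
  rw [sum_congr rfl fun j _ => intervalOverlap_eq_sub hab (hf j.le_succ),
    sum_range_sub (fun t => max a (min b (f t))), min_eq_left hb, max_eq_right hab,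
    min_eq_right (ha.trans hab), max_eq_left ha]

end IntervalOverlap

section BreakpointSchedule

variable {n m : ℕ} {p : ℚ} {q Q : ℕ} {P : ℚ}

def breakpointSchedule (c : ℕ → ℚ) (p : ℚ) (i : Fin n) (j : Fin m) : ℚ :=
  p * intervalOverlap (i : ℚ) (i + 1) (c j) (c (j + 1))

theorem feasCommon_breakpointSchedule {c : ℕ → ℚ} (hc : Monotone c) (hc0 : c 0 = 0)
    (hcm : c m = n) (hp : 0 ≤ p)
    (hcount : ∀ j : Fin m, ⌈c (j + 1)⌉₊ ≤ ⌊c j⌋₊ + Q / q)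
    (hload : ∀ j : Fin m, p * (c (j + 1) - c j) ≤ P) :
    FeasCommon n m p q Q P (breakpointSchedule c p) := by
  have hc_nonneg (t : ℕ) : 0 ≤ c t := hc0 ▸ hc t.zero_le
  refine ⟨fun i j => mul_nonneg hp intervalOverlap_nonneg, fun i => ?_, fun j => ?_,
    fun j => ?_⟩
  · have hrow : ∑ j : Fin m, intervalOverlap (i : ℚ) (i + 1) (c j) (c (j + 1)) = 1 := by
      rw [Fin.sum_univ_eq_sum_range (fun j => intervalOverlap (i : ℚ) (i + 1) (c j) (c (j + 1))),
        sum_range_intervalOverlap hc (by linarith) (by rw [hc0]; positivity)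
          (by rw [hcm]; exact_mod_cast i.isLt)]
      ring
    simp only [breakpointSchedule, ← mul_sum, hrow, mul_one, le_refl]
  · calc #{i | breakpointSchedule c p i j ≠ 0} ≤ #(Ico ⌊c j⌋₊ ⌈c (j + 1)⌉₊) := by
          refine card_le_card_of_injOn (fun i => (i : ℕ)) (fun i hi => ?_) Fin.val_injective.injOn
          obtain ⟨hlow, hhigh⟩ := lt_and_lt_of_intervalOverlap_ne_zero
            (right_ne_zero_of_mul (mem_filter.1 hi).2)
          rw [coe_Ico, Set.mem_Ico, Nat.lt_ceil, ← Nat.lt_add_one_iff,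
            Nat.floor_lt (hc_nonneg _)]
          exact ⟨by exact_mod_cast hlow, by exact_mod_cast hhigh⟩
      _ ≤ Q / q := by
          rw [Nat.card_Ico]
          exact Nat.sub_le_iff_le_add'.2 (hcount j)
  · have hcol : ∑ i : Fin n, intervalOverlap (i : ℚ) (i + 1) (c j) (c (j + 1)) =
        c (j + 1) - c j := by
      simp_rw [intervalOverlap_comm (_ : ℚ)]
      have := Fin.sum_univ_eq_sum_range
        (fun i : ℕ => intervalOverlap (c j) (c (j + 1)) (i : ℚ) ((i + 1 : ℕ) : ℚ)) n
      have htel := sum_range_intervalOverlap (f := fun i : ℕ => (i : ℚ)) Nat.mono_cast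
        (hc (Nat.le_succ j)) (by simpa using hc_nonneg _) (by rw [← hcm]; exact hc (by omega))
      push_cast at this htel
      rw [this, htel]
    simpa only [breakpointSchedule, ← mul_sum, hcol] using hload j

end BreakpointSchedule

section Constructions

variable {n m : ℕ} {p : ℚ} {q Q : ℕ} {P : ℚ}

theorem ceil_succ_mul_div_le {n m : ℕ} (hm : 0 < m) (t : ℕ) :
    ⌈((t + 1 : ℕ) : ℚ) * n / m⌉₊ ≤
      ⌊(t : ℚ) * n / m⌋₊ + ceilDiv' n m + (if n % m = 0 then 0 else 1) := by
  split_ifs with h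
  · have hn : (n : ℚ) = m * (n / m : ℕ) := by
      exact_mod_cast (Nat.mul_div_cancel' (Nat.dvd_of_mod_eq_zero h)).symm
    have hcast (s : ℕ) : (s : ℚ) * n / m = (s * (n / m) : ℕ) := by
      rw [hn]; field_simp; push_cast; ring
    rw [hcast, hcast, Nat.ceil_natCast, Nat.floor_natCast, ceilDiv', if_pos h, add_one_mul]
    omega
  · have hL : ⌈(n : ℚ) / m⌉₊ ≤ ceilDiv' n m := by
      rw [Nat.ceil_le, div_le_iff₀ (by exact_mod_cast hm)]
      exact_mod_cast (le_mul_ceilDiv' (n := n) hm).trans_eq (mul_comm _ _)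
    calc ⌈((t + 1 : ℕ) : ℚ) * n / m⌉₊ = ⌈(t : ℚ) * n / m + n / m⌉₊ := by
          push_cast; ring_nf
      _ ≤ ⌈(t : ℚ) * n / m⌉₊ + ⌈(n : ℚ) / m⌉₊ := Nat.ceil_add_le _ _
      _ ≤ ⌊(t : ℚ) * n / m⌋₊ + 1 + ceilDiv' n m :=
          add_le_add (Nat.ceil_le_floor_add_one _) hL
      _ = _ := by ring

theorem exists_feasCommon_of_mul_div_le (hm : 0 < m) (hp : 0 ≤ p) (hQ : ceilDiv' n m ≤ Q / q)
    (hcase : n % m = 0 ∨ ceilDiv' n m < Q / q) (hP : p * n / m ≤ P) :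
    ∃ x, FeasCommon n m p q Q P x := by
  refine ⟨_, feasCommon_breakpointSchedule (c := fun t => (t : ℚ) * n / m)
    (fun s t hst => by dsimp only; gcongr) (by simp) (by field_simp) hp (fun j => ?_)
    (fun j => ?_)⟩
  · refine (ceil_succ_mul_div_le hm j).trans ?_
    split_ifs with h <;> omega
  · convert hP using 1
    push_cast
    field_simp
    ring

def blockBreakpoint (a g K t : ℕ) : ℚ := t * a + (min t K : ℕ) / g

theorem blockBreakpoint_mono (a g K : ℕ) : Monotone (blockBreakpoint a g K) :=
  monotone_nat_of_le_succ fun t => by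
    unfold blockBreakpoint
    gcongr
    · linarith
    · omega

theorem blockBreakpoint_succ_sub_le {a g : ℕ} (hg : 0 < g) (K t : ℕ) :
    blockBreakpoint a g K (t + 1) - blockBreakpoint a g K t ≤ a + 1 / g := by
  have hg' : (0 : ℚ) < g := by exact_mod_cast hg
  have hmin : ((min (t + 1) K : ℕ) : ℚ) ≤ (min t K : ℕ) + 1 := by
    exact_mod_cast (show min (t + 1) K ≤ min t K + 1 by omega)
  simp only [blockBreakpoint, Nat.cast_add, Nat.cast_one]
  linarith [div_le_div_of_nonneg_right hmin hg'.le, add_div ((min t K : ℕ) : ℚ) 1 g]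

theorem ceil_blockBreakpoint_succ_le {a g : ℕ} (hg : 0 < g) (K t : ℕ) :
    ⌈blockBreakpoint a g K (t + 1)⌉₊ ≤ ⌊blockBreakpoint a g K t⌋₊ + (a + 1) := by
  have hg' : (0 : ℚ) < g := by exact_mod_cast hg
  set s := min t K
  have hfloor : t * a + s / g ≤ ⌊blockBreakpoint a g K t⌋₊ := by
    refine Nat.le_floor ?_
    rw [blockBreakpoint, Nat.cast_add, Nat.cast_mul]
    exact add_le_add_right (Nat.cast_div_le (α := ℚ)) _
  refine le_trans ?_ (Nat.add_le_add_right hfloor _)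
  have hdiv : ((min (t + 1) K : ℕ) : ℚ) / g ≤ (s / g : ℕ) + 1 := by
    rw [div_le_iff₀ hg']
    exact_mod_cast (show min (t + 1) K ≤ s + 1 by omega).trans (Nat.lt_mul_div_succ s hg)
      |>.trans_eq (mul_comm _ _)
  rw [Nat.ceil_le]
  simp only [blockBreakpoint, Nat.cast_add, Nat.cast_mul, Nat.cast_one]
  linarith

theorem exists_feasCommon_of_tight (hm : 0 < m) (hp : 0 ≤ p) (hr : n % m ≠ 0)
    (hQ : n / m + 1 ≤ Q / q) (hP : p * ((n / m : ℕ) + 1 / (m / (n % m) : ℕ)) ≤ P) :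
    ∃ x, FeasCommon n m p q Q P x := by
  set a := n / m
  set r := n % m
  set g := m / r
  have hg : 0 < g := Nat.div_pos (Nat.mod_lt n hm).le (Nat.pos_of_ne_zero hr)
  have hrg : r * g ≤ m := Nat.mul_div_le m r
  refine ⟨_, feasCommon_breakpointSchedule (c := blockBreakpoint a g (r * g))
    (blockBreakpoint_mono a g _) (by simp [blockBreakpoint]) ?_ hp
    (fun j => (ceil_blockBreakpoint_succ_le hg _ j).trans (Nat.add_le_add_left hQ _))
    (fun j => (mul_le_mul_of_nonneg_left (blockBreakpoint_succ_sub_le hg _ j) hp).trans hP)⟩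
  simp only [blockBreakpoint, min_eq_right hrg]
  push_cast
  rw [mul_div_cancel_right₀ _ (by exact_mod_cast hg.ne')]
  exact_mod_cast Nat.div_add_mod n m

end Constructions

namespace SimpleGraph

theorem ConnectedComponent.sum_card_mem_supp {V α : Type*} [Fintype V] [DecidableEq V]
    [Fintype α] {G : SimpleGraph V} [DecidableRel G.Adj] (f : α → V) :
    ∑ C : G.ConnectedComponent, #{a | f a ∈ C.supp} = Fintype.card α := by
  classical
  rw [← card_univ, card_eq_sum_card_fiberwise (f := fun a => G.connectedComponentMk (f a))
    (t := univ) fun _ _ => mem_univ _]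
  refine sum_congr rfl fun C _ => congrArg card (filter_congr fun a _ => ?_)
  exact C.mem_supp_iff (f a)

variable {α β : Type*}

def bipartiteOfRel (R : α → β → Prop) : SimpleGraph (α ⊕ β) where
  Adj
  | .inl i, .inr j | .inr j, .inl i => R i j
  | _, _ => False
  symm := ⟨by rintro (_ | _) (_ | _) h <;> exact h⟩
  loopless := ⟨by rintro (_ | _) h <;> exact h⟩

variable {R : α → β → Prop}

@[simp] theorem bipartiteOfRel_adj_inl_inr {i : α} {j : β} :
    (bipartiteOfRel R).Adj (.inl i) (.inr j) ↔ R i j := .rfl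

instance [h : DecidableRel R] : DecidableRel (bipartiteOfRel R).Adj
  | .inl i, .inr j | .inr j, .inl i => h i j
  | .inl _, .inl _ | .inr _, .inr _ => inferInstanceAs (Decidable False)

theorem ConnectedComponent.inr_mem_supp_of_rel {C : (bipartiteOfRel R).ConnectedComponent}
    {i : α} {j : β} (hij : R i j) (hi : .inl i ∈ C.supp) : .inr j ∈ C.supp :=
  (C.mem_supp_congr_adj (bipartiteOfRel_adj_inl_inr.2 hij)).1 hi

variable [Fintype α] [Fintype β] [DecidableEq α] [DecidableEq β] [DecidableRel R]

/-- The component is connected, so it has at least as many edges as vertices minus one; each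
edge is counted at its endpoint in `β`. -/
theorem ConnectedComponent.card_add_card_le_sum_card_add_one
    (C : (bipartiteOfRel R).ConnectedComponent) :
    #{i | .inl i ∈ C.supp} + #{j | .inr j ∈ C.supp} ≤
      ∑ j with .inr j ∈ C.supp, #{i | R i j} + 1 := by
  have hV : Nat.card C.supp = #{i | .inl i ∈ C.supp} + #{j | .inr j ∈ C.supp} := by
    rw [Nat.card_eq_fintype_card, Fintype.card_subtype, card_filter, Fintype.sum_sum_type,
      card_filter, card_filter]
  have hE : Nat.card C.toSimpleGraph.edgeSet ≤ ∑ j with .inr j ∈ C.supp, #{i | R i j} := by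
    let f : {e : α × β // R e.1 e.2 ∧ .inr e.2 ∈ C.supp} → C.toSimpleGraph.edgeSet :=
      fun e => ⟨s(⟨.inl e.1.1, (C.mem_supp_congr_adj (bipartiteOfRel_adj_inl_inr.2 e.2.1)).2 e.2.2⟩,
        ⟨.inr e.1.2, e.2.2⟩), e.2.1⟩
    have hf : Function.Surjective f := by
      rintro ⟨e, he⟩
      induction e using Sym2.ind with
      | h u v =>
        obtain ⟨u | u, hu⟩ := u <;> obtain ⟨v | v, hv⟩ := v
        · exact he.elim
        · exact ⟨⟨(u, v), he, hv⟩, rfl⟩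
        · exact ⟨⟨(v, u), he, hu⟩, Subtype.ext Sym2.eq_swap⟩
        · exact he.elim
    calc Nat.card C.toSimpleGraph.edgeSet
        ≤ Nat.card {e : α × β // R e.1 e.2 ∧ .inr e.2 ∈ C.supp} :=
          Nat.card_le_card_of_surjective f hf
      _ = ∑ j with .inr j ∈ C.supp, #{i | R i j} := by
        rw [Nat.card_eq_fintype_card, Fintype.card_subtype, card_filter, Fintype.sum_prod_type,
          sum_comm, sum_filter]
        refine sum_congr rfl fun j _ => ?_
        split_ifs with hj <;>
          simp only [hj, and_true, and_false, card_filter, if_false, sum_const_zero]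
  have := C.connected_toSimpleGraph.card_vert_le_card_edgeSet_add_one
  change Nat.card C.supp ≤ _ at this
  omega

end SimpleGraph

theorem sum_sum_le_sum_sum_of_support {α β M : Type*} [Fintype α] [Fintype β] [AddCommMonoid M]
    [PartialOrder M] [IsOrderedAddMonoid M] {x : α → β → M}
    (hx : ∀ i j, 0 ≤ x i j) {s : Finset α} {t : Finset β}
    (hst : ∀ i ∈ s, ∀ j, x i j ≠ 0 → j ∈ t) :
    ∑ i ∈ s, ∑ j, x i j ≤ ∑ j ∈ t, ∑ i, x i j :=
  calc ∑ i ∈ s, ∑ j, x i j = ∑ i ∈ s, ∑ j ∈ t, x i j :=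
        sum_congr rfl fun i hi => (sum_subset (subset_univ t) fun j _ hj =>
          not_not.1 fun h => hj (hst i hi j h)).symm
    _ = ∑ j ∈ t, ∑ i ∈ s, x i j := sum_comm
    _ ≤ ∑ j ∈ t, ∑ i, x i j :=
        sum_le_sum fun j _ => sum_le_sum_of_subset_of_nonneg (subset_univ s) fun i _ _ => hx i j

theorem exists_eq_mul_add_one_and_mul_le_sum {ι : Type*} {s : Finset ι} {f g : ι → ℕ}
    {a r : ℕ} (hr : 0 < r) (hle : ∀ i ∈ s, f i ≤ a * g i + 1)
    (hsum : ∑ i ∈ s, f i = a * ∑ i ∈ s, g i + r) :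
    ∃ i ∈ s, f i = a * g i + 1 ∧ r * g i ≤ ∑ i ∈ s, g i := by
  have hT : r ≤ #{i ∈ s | f i = a * g i + 1} := by
    have : ∑ i ∈ s, f i ≤ ∑ i ∈ s, (a * g i + if f i = a * g i + 1 then 1 else 0) :=
      sum_le_sum fun i hi => by
        have := hle i hi
        split_ifs <;> omega
    rw [sum_add_distrib, ← mul_sum, ← card_filter] at this
    omega
  obtain ⟨i, hiT, hi⟩ := exists_le_of_sum_le (card_pos.1 (hr.trans_le hT))
    (f := fun i => r * g i) (g := fun _ => ∑ i ∈ s, g i) <| by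
      rw [← mul_sum, sum_const, smul_eq_mul]
      exact Nat.mul_le_mul hT (sum_le_sum_of_subset (filter_subset _ _))
  exact ⟨i, (mem_filter.1 hiT).1, (mem_filter.1 hiT).2, hi⟩

theorem mul_add_one_div_le {p P : ℚ} {a b g : ℕ} (hp : 0 < p) (hbg : b ≤ g)
    (h : p * (a * b + 1) ≤ b * P) : p * (a + 1 / g) ≤ P := by
  have hb : (0 : ℚ) < b := by
    rcases Nat.eq_zero_or_pos b with rfl | hb
    · simp only [Nat.cast_zero, mul_zero, zero_add, mul_one, zero_mul] at h
      linarith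
    · exact_mod_cast hb
  calc p * (a + 1 / g) ≤ p * (a + 1 / b) := by gcongr
    _ = p * (a * b + 1) / b := by field_simp
    _ ≤ P := by rwa [div_le_iff₀ hb, mul_comm P]

namespace FeasCommon

variable {n m : ℕ} {p : ℚ} {q Q : ℕ} {P : ℚ} {x : Fin n → Fin m → ℚ}

theorem mul_div_le (hx : FeasCommon n m p q Q P x) (hm : 0 < m) : p * n / m ≤ P := by
  obtain ⟨-, hrow, -, hload⟩ := hx
  rw [div_le_iff₀ (by exact_mod_cast hm)]
  calc p * n = ∑ _i : Fin n, p := by simp [mul_comm]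
    _ ≤ ∑ i, ∑ j, x i j := sum_le_sum fun i _ => hrow i
    _ = ∑ j, ∑ i, x i j := sum_comm
    _ ≤ ∑ _j : Fin m, P := sum_le_sum fun j _ => hload j
    _ = P * m := by simp [mul_comm]

theorem add_one_div_le (hx : FeasCommon n m p q Q P x) (hp : 0 < p)
    (hr : n % m ≠ 0) (hQ : Q / q = n / m + 1) :
    p * ((n / m : ℕ) + 1 / (m / (n % m) : ℕ)) ≤ P := by
  obtain ⟨hnn, hrow, hcount, hload⟩ := hx
  let G := SimpleGraph.bipartiteOfRel fun i j => x i j ≠ 0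
  let A (C : G.ConnectedComponent) : Finset (Fin n) := {i | .inl i ∈ C.supp}
  let B (C : G.ConnectedComponent) : Finset (Fin m) := {j | .inr j ∈ C.supp}
  have hA (C : G.ConnectedComponent) : #(A C) ≤ n / m * #(B C) + 1 := by
    have hedges : #(A C) + #(B C) ≤ ∑ j ∈ B C, #{i | x i j ≠ 0} + 1 :=
      C.card_add_card_le_sum_card_add_one
    have : ∑ j ∈ B C, #{i | x i j ≠ 0} ≤ #(B C) * (n / m + 1) := by
      simpa only [smul_eq_mul, hQ] using sum_le_card_nsmul _ _ _ fun j _ => hcount j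
    rw [mul_add_one] at this
    have := mul_comm (n / m) #(B C)
    omega
  have hloadC (C : G.ConnectedComponent) : p * #(A C) ≤ #(B C) * P :=
    calc p * #(A C) ≤ ∑ i ∈ A C, ∑ j, x i j := by
          simpa [mul_comm] using card_nsmul_le_sum _ _ _ fun i _ => hrow i
      _ ≤ ∑ j ∈ B C, ∑ i, x i j := sum_sum_le_sum_sum_of_support hnn fun i hi j hij => by
          simpa [B] using C.inr_mem_supp_of_rel hij (by simpa [A] using hi)
      _ ≤ #(B C) * P := by simpa using sum_le_card_nsmul _ _ _ fun j _ => hload j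
  have hsum : ∑ C, #(A C) = n / m * ∑ C, #(B C) + n % m := by
    simp only [A, B, SimpleGraph.ConnectedComponent.sum_card_mem_supp, Fintype.card_fin]
    exact (Nat.div_add_mod n m).symm.trans (by ring)
  obtain ⟨C, -, hCA, hCB⟩ :=
    exists_eq_mul_add_one_and_mul_le_sum (Nat.pos_of_ne_zero hr) (fun C _ => hA C) hsum
  refine mul_add_one_div_le hp (b := #(B C)) ?_ ?_
  · rw [Nat.le_div_iff_mul_le (Nat.pos_of_ne_zero hr), mul_comm]
    simpa [B, SimpleGraph.ConnectedComponent.sum_card_mem_supp] using hCB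
  · exact_mod_cast hCA ▸ hloadC C

theorem exists_of_le {m₁ m₂ : ℕ} {x : Fin n → Fin m₁ → ℚ} (hx : FeasCommon n m₁ p q Q P x)
    (h : m₁ ≤ m₂) (hP : 0 ≤ P) :
    ∃ y : Fin n → Fin m₂ → ℚ, FeasCommon n m₂ p q Q P y := by
  obtain ⟨k, rfl⟩ := Nat.exists_eq_add_of_le h
  obtain ⟨hnn, hrow, hcount, hload⟩ := hx
  refine ⟨fun i => Fin.addCases (x i) fun _ => 0, fun i j => ?_, fun i => ?_, fun j => ?_,
    fun j => ?_⟩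
  · refine Fin.addCases (fun j => ?_) (fun j => ?_) j <;> simp [hnn]
  · simpa [Fin.sum_univ_add] using hrow i
  · refine Fin.addCases (fun j => ?_) (fun j => ?_) j <;> simp [hcount]
  · refine Fin.addCases (fun j => ?_) (fun j => ?_) j <;> simp [hload, hP]

end FeasCommon

section OptLoad

variable {n m : ℕ} {p : ℚ} {q Q : ℕ} {P : ℚ}

theorem optLoad_nonneg (hp : 0 ≤ p) : 0 ≤ optLoad n p q Q m := by
  unfold optLoad
  split_ifs <;> positivity

theorem exists_feasCommon_iff_optLoad_le (hp : 0 < p) (hm : 0 < m) (hQ : ceilDiv' n m ≤ Q / q) :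
    (∃ x, FeasCommon n m p q Q P x) ↔ optLoad n p q Q m ≤ P := by
  rw [optLoad]
  split_ifs with hcase
  · exact ⟨fun ⟨x, hx⟩ => hx.mul_div_le hm,
      exists_feasCommon_of_mul_div_le hm hp.le hQ hcase⟩
  · obtain ⟨hr, hQ'⟩ := not_or.1 hcase
    rw [not_lt] at hQ'
    have hQq : Q / q = n / m + 1 := by
      rw [ceilDiv', if_neg hr] at hQ hQ'
      omega
    exact ⟨fun ⟨x, hx⟩ => hx.add_one_div_le hp hr hQq,
      exists_feasCommon_of_tight hm hp.le hr hQq.ge⟩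

theorem optLoad_le_optLoad (hp : 0 < p) {m₁ m₂ : ℕ} (hm₁ : 0 < m₁) (h : m₁ ≤ m₂)
    (hQ : ceilDiv' n m₁ ≤ Q / q) : optLoad n p q Q m₂ ≤ optLoad n p q Q m₁ := by
  obtain ⟨x, hx⟩ :=
    (exists_feasCommon_iff_optLoad_le (P := optLoad n p q Q m₁) hp hm₁ hQ).2 le_rfl
  exact (exists_feasCommon_iff_optLoad_le hp (hm₁.trans_le h)
    ((ceilDiv'_le_ceilDiv' hm₁ h).trans hQ)).1 (hx.exists_of_le h (optLoad_nonneg hp.le))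

end OptLoad

theorem binary_search_correct_general (n : ℕ) (p : ℚ) (q Q : ℕ) (P : ℚ)
    (hp : 0 < p) :
    (∀ m : ℕ, 0 < m → ceilDiv' n m ≤ Q / q →
      ((∃ x : Fin n → Fin m → ℚ, FeasCommon n m p q Q P x) ↔ optLoad n p q Q m ≤ P)) ∧
    (∀ m₁ m₂ : ℕ, 0 < m₁ → m₁ ≤ m₂ → ceilDiv' n m₁ ≤ Q / q →
      optLoad n p q Q m₂ ≤ optLoad n p q Q m₁) :=
  ⟨fun _ hm hQ => exists_feasCommon_iff_optLoad_le hp hm hQ,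
    fun _ _ hm₁ h hQ => optLoad_le_optLoad hp hm₁ h hQ⟩

/-- `m` machines suffice iff `P'(m) ≤ P`, and `P'` is non-increasing in `m`;
hence binary search over the number of machines is correct. -/
theorem binary_search_correct (n : ℕ) (p : ℚ) (q Q : ℕ) (P : ℚ)
    (hn : 0 < n) (hp : 0 < p) (hq : 0 < q) (hqQ : q ≤ Q) :
    (∀ m : ℕ, 0 < m → ceilDiv' n m ≤ Q / q →
      ((∃ x : Fin n → Fin m → ℚ, FeasCommon n m p q Q P x) ↔ optLoad n p q Q m ≤ P)) ∧
    (∀ m₁ m₂ : ℕ, 0 < m₁ → m₁ ≤ m₂ → ceilDiv' n m₁ ≤ Q / q →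
      optLoad n p q Q m₂ ≤ optLoad n p q Q m₁) :=
  binary_search_correct_general n p q Q P hp
end
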